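/- Let 1 ≤ p ≤ ∞ and 1 < q < ∞. A weight ω belongs to A_p(ℝⁿ) ∩ RH_q(ℝⁿ) if and only if ω^q belongs to A_{q(p-1)+1}(ℝⁿ). -/

import Mathlib

open MeasureTheory Metric Set ENNReal

/-- Average of an `ℝ≥0∞`-valued function over the axis-parallel cube
`closedBall c r` (sup-norm ball) in `ℝⁿ`. -/
noncomputable def avgE (n : ℕ) (f : (Fin n → ℝ) → ℝ≥0∞) (c : Fin n → ℝ) (r : ℝ) : ℝ≥0∞ :=
  (volume (closedBall c r))⁻¹ * ∫⁻ x in closedBall c r, f x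

/-- A weight on `ℝⁿ`: measurable, a.e. positive and locally integrable. -/
def IsWeight (n : ℕ) (ω : (Fin n → ℝ) → ℝ≥0∞) : Prop :=
  Measurable ω ∧ (∀ᵐ x ∂(volume : Measure (Fin n → ℝ)), 0 < ω x) ∧
    ∀ (c : Fin n → ℝ) (r : ℝ), 0 < r → (∫⁻ x in closedBall c r, ω x) < ⊤

/-- The Muckenhoupt class `A_p(ℝⁿ)` for a real exponent `1 ≤ p < ∞`, with the
usual modification when `p = 1`. -/
noncomputable def MemAp (n : ℕ) (p : ℝ) (ω : (Fin n → ℝ) → ℝ≥0∞) : Prop :=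
  if p = 1 then
    ∃ C : ℝ≥0∞, C ≠ ⊤ ∧ ∀ (c : Fin n → ℝ) (r : ℝ), 0 < r →
      ∀ᵐ y ∂(volume.restrict (closedBall c r)), avgE n ω c r ≤ C * ω y
  else
    ∃ C : ℝ≥0∞, C ≠ ⊤ ∧ ∀ (c : Fin n → ℝ) (r : ℝ), 0 < r →
      avgE n ω c r * (avgE n (fun x => ω x ^ (1 - p / (p - 1))) c r) ^ (p - 1) ≤ C

/-- The Muckenhoupt class `A_p(ℝⁿ)` for `1 ≤ p ≤ ∞`; when `p = ∞` this is
`A_∞(ℝⁿ) = ⋃_{r ≥ 1} A_r(ℝⁿ)`. -/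
noncomputable def MemApE (n : ℕ) (p : ℝ≥0∞) (ω : (Fin n → ℝ) → ℝ≥0∞) : Prop :=
  if p = ⊤ then ∃ r : ℝ, 1 ≤ r ∧ MemAp n r ω else MemAp n p.toReal ω

/-- The reverse Hölder class `RH_q(ℝⁿ)` for a finite real exponent `q > 1`. -/
def MemRH (n : ℕ) (q : ℝ) (ω : (Fin n → ℝ) → ℝ≥0∞) : Prop :=
  ∃ C : ℝ≥0∞, C ≠ ⊤ ∧ ∀ (c : Fin n → ℝ) (r : ℝ), 0 < r →
    (avgE n (fun x => ω x ^ q) c r) ^ (1 / q) ≤ C * avgE n ω c r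

/-!
Write `⟨f⟩` for the average of `f` over a cube and `σ = ω^{-1/(p-1)}`. Since
`(ω^q)^{-1/(q(p-1))} = σ`, the `A_{q(p-1)+1}` product of `ω^q` is `⟨ω^q⟩⟨σ⟩^{q(p-1)}`. Reverse
Hölder `⟨ω^q⟩ ≤ C⟨ω⟩^q` bounds it by `C` times the `q`-th power of the `A_p` product
`⟨ω⟩⟨σ⟩^{p-1}`. Conversely, Jensen's inequality `⟨ω⟩^q ≤ ⟨ω^q⟩` gives `A_p`, and Hölder's
inequality `1 ≤ ⟨ω⟩⟨σ⟩^{p-1}` gives `⟨ω^q⟩ ≤ ⟨ω^q⟩⟨σ⟩^{q(p-1)}⟨ω⟩^q ≤ C⟨ω⟩^q`. For `p = 1` the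
same argument runs pointwise, and `p = ∞` follows because `s ↦ q(s-1)+1` maps `[1, ∞)` onto
itself.
-/

section ProbabilityMeasure

variable {α : Type*} [MeasurableSpace α] {μ : Measure α} [IsProbabilityMeasure μ]

theorem lintegral_le_lintegral_rpow_inv {f : α → ℝ≥0∞} (hf : AEMeasurable f μ) {t : ℝ}
    (ht : 1 < t) : ∫⁻ x, f x ∂μ ≤ (∫⁻ x, f x ^ t ∂μ) ^ t⁻¹ := by
  simpa using ENNReal.lintegral_mul_le_Lp_mul_Lq μ (.conjExponent ht) hf aemeasurable_const
    (g := 1)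

theorem le_mul_lintegral_of_ae_le_mul {f : α → ℝ≥0∞} (hf : AEMeasurable f μ) {a K : ℝ≥0∞}
    (h : ∀ᵐ x ∂μ, a ≤ K * f x) : a ≤ K * ∫⁻ x, f x ∂μ :=
  calc a = ∫⁻ _, a ∂μ := by simp
    _ ≤ ∫⁻ x, K * f x ∂μ := lintegral_mono_ae h
    _ = K * ∫⁻ x, f x ∂μ := lintegral_const_mul'' K hf

theorem one_le_lintegral_mul_lintegral_rpow_neg_inv {f : α → ℝ≥0∞} (hf : AEMeasurable f μ)
    (hpos : ∀ᵐ x ∂μ, 0 < f x) (hfin : ∀ᵐ x ∂μ, f x < ⊤) {p : ℝ} (hp : 1 < p) :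
    1 ≤ (∫⁻ x, f x ∂μ) * (∫⁻ x, f x ^ (-(p - 1)⁻¹) ∂μ) ^ (p - 1) := by
  have hpq : p.HolderConjugate p.conjExponent := .conjExponent hp
  have hfg : (fun x => f x ^ p⁻¹) * (fun x => f x ^ (-p⁻¹)) =ᵐ[μ] 1 := by
    filter_upwards [hpos, hfin] with x hx0 hxt
    simp [← ENNReal.rpow_add _ _ hx0.ne' hxt.ne]
  have hholder := ENNReal.lintegral_mul_le_Lp_mul_Lq μ hpq (hf.pow_const p⁻¹)
    (hf.pow_const (-p⁻¹))
  have hexp : -p⁻¹ * p.conjExponent = -(p - 1)⁻¹ := by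
    rw [Real.conjExponent]; field_simp
  simp only [lintegral_congr_ae hfg, ← ENNReal.rpow_mul, hexp, inv_mul_cancel₀ hpq.ne_zero,
    ENNReal.rpow_one, Pi.one_apply, lintegral_const, measure_univ, mul_one] at hholder
  calc (1 : ℝ≥0∞) ≤ (_ * _) ^ p := by simpa using ENNReal.rpow_le_rpow hholder hpq.nonneg
    _ = _ := by
      rw [ENNReal.mul_rpow_of_nonneg _ _ hpq.nonneg, ← ENNReal.rpow_mul, ← ENNReal.rpow_mul,
        inv_mul_cancel₀ hpq.ne_zero, ENNReal.rpow_one, inv_mul_eq_div, hpq.div_conj_eq_sub_one]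

end ProbabilityMeasure

theorem ENNReal.rpow_inv_le_mul_iff {x y C : ℝ≥0∞} {q : ℝ} (hq : 0 < q) :
    x ^ q⁻¹ ≤ C * y ↔ x ≤ C ^ q * y ^ q := by
  rw [ENNReal.rpow_inv_le_iff hq, ENNReal.mul_rpow_of_nonneg _ _ hq.le]

section Cube

variable {n : ℕ} {c : Fin n → ℝ} {r : ℝ}

noncomputable def normalizedVolume (n : ℕ) (c : Fin n → ℝ) (r : ℝ) : Measure (Fin n → ℝ) :=
  (volume (closedBall c r))⁻¹ • volume.restrict (closedBall c r)

theorem isProbabilityMeasure_normalizedVolume (hr : 0 < r) :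
    IsProbabilityMeasure (normalizedVolume n c r) := by
  constructor
  simp only [normalizedVolume, Measure.smul_apply, Measure.restrict_apply_univ, smul_eq_mul]
  exact ENNReal.inv_mul_cancel (measure_closedBall_pos _ _ hr).ne'
    (isCompact_closedBall c r).measure_lt_top.ne

theorem avgE_eq_lintegral_normalizedVolume (f : (Fin n → ℝ) → ℝ≥0∞) :
    avgE n f c r = ∫⁻ x, f x ∂normalizedVolume n c r := by
  rw [avgE, normalizedVolume, lintegral_smul_measure, smul_eq_mul]

theorem ae_normalizedVolume_of_ae_restrict {P : (Fin n → ℝ) → Prop}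
    (h : ∀ᵐ x ∂volume.restrict (closedBall c r), P x) : ∀ᵐ x ∂normalizedVolume n c r, P x :=
  Measure.ae_smul_measure h _

theorem avgE_le_avgE_rpow_inv {f : (Fin n → ℝ) → ℝ≥0∞} (hf : Measurable f) (hr : 0 < r)
    {t : ℝ} (ht : 1 < t) : avgE n f c r ≤ avgE n (fun x => f x ^ t) c r ^ t⁻¹ := by
  have := isProbabilityMeasure_normalizedVolume (n := n) (c := c) hr
  simp only [avgE_eq_lintegral_normalizedVolume]
  exact lintegral_le_lintegral_rpow_inv hf.aemeasurable ht

theorem le_mul_avgE_of_ae_le_mul {f : (Fin n → ℝ) → ℝ≥0∞} (hf : Measurable f) (hr : 0 < r)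
    {a K : ℝ≥0∞} (h : ∀ᵐ x ∂volume.restrict (closedBall c r), a ≤ K * f x) :
    a ≤ K * avgE n f c r := by
  have := isProbabilityMeasure_normalizedVolume (n := n) (c := c) hr
  rw [avgE_eq_lintegral_normalizedVolume]
  exact le_mul_lintegral_of_ae_le_mul hf.aemeasurable (ae_normalizedVolume_of_ae_restrict h)

theorem IsWeight.one_le_avgE_mul_avgE_rpow_neg_inv {ω : (Fin n → ℝ) → ℝ≥0∞}
    (hω : IsWeight n ω) (hr : 0 < r) {p : ℝ} (hp : 1 < p) :
    1 ≤ avgE n ω c r * avgE n (fun x => ω x ^ (-(p - 1)⁻¹)) c r ^ (p - 1) := by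
  obtain ⟨hm, hpos, hloc⟩ := hω
  have := isProbabilityMeasure_normalizedVolume (n := n) (c := c) hr
  simp only [avgE_eq_lintegral_normalizedVolume]
  exact one_le_lintegral_mul_lintegral_rpow_neg_inv hm.aemeasurable
    (ae_normalizedVolume_of_ae_restrict (ae_restrict_of_ae hpos))
    (ae_normalizedVolume_of_ae_restrict (ae_lt_top hm (hloc c r hr).ne)) hp

end Cube

section Muckenhoupt

variable {n : ℕ} {ω : (Fin n → ℝ) → ℝ≥0∞} {p q : ℝ}

theorem memRH_iff (hq : 0 < q) : MemRH n q ω ↔ ∃ C : ℝ≥0∞, C ≠ ⊤ ∧ ∀ (c : Fin n → ℝ) (r : ℝ),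
    0 < r → avgE n (fun x => ω x ^ q) c r ≤ C * avgE n ω c r ^ q := by
  simp only [MemRH, one_div, rpow_inv_le_mul_iff hq]
  constructor
  · rintro ⟨C, hC, h⟩
    exact ⟨C ^ q, ENNReal.rpow_ne_top_of_nonneg hq.le hC, h⟩
  · rintro ⟨C, hC, h⟩
    refine ⟨C ^ q⁻¹, ENNReal.rpow_ne_top_of_nonneg (inv_nonneg.2 hq.le) hC, fun c r hr => ?_⟩
    rw [ENNReal.rpow_inv_rpow hq.ne']
    exact h c r hr

theorem memAp_iff_of_one_lt (hp : 1 < p) : MemAp n p ω ↔ ∃ C : ℝ≥0∞, C ≠ ⊤ ∧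
    ∀ (c : Fin n → ℝ) (r : ℝ), 0 < r →
      avgE n ω c r * avgE n (fun x => ω x ^ (-(p - 1)⁻¹)) c r ^ (p - 1) ≤ C := by
  have hexp : 1 - p / (p - 1) = -(p - 1)⁻¹ := by
    field_simp [(sub_pos.2 hp).ne']
    ring
  rw [MemAp, if_neg hp.ne', hexp]

theorem memAp_rpow_iff_of_one_lt (hq : 0 < q) (hp : 1 < p) :
    MemAp n (q * (p - 1) + 1) (fun x => ω x ^ q) ↔ ∃ C : ℝ≥0∞, C ≠ ⊤ ∧
      ∀ (c : Fin n → ℝ) (r : ℝ), 0 < r → avgE n (fun x => ω x ^ q) c r *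
        avgE n (fun x => ω x ^ (-(p - 1)⁻¹)) c r ^ (q * (p - 1)) ≤ C := by
  have hqp : 0 < q * (p - 1) := mul_pos hq (sub_pos.2 hp)
  have hσ : (fun x => (ω x ^ q) ^ (-(q * (p - 1) + 1 - 1)⁻¹)) = fun x => ω x ^ (-(p - 1)⁻¹) := by
    ext x
    rw [← ENNReal.rpow_mul]
    congr 1
    field_simp [hq.ne', (sub_pos.2 hp).ne']
    ring
  rw [memAp_iff_of_one_lt (by linarith), hσ, add_sub_cancel_right]

theorem memAp_one_rpow_of_memAp_one_of_memRH (hq : 0 < q) (hA : MemAp n 1 ω)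
    (hRH : MemRH n q ω) : MemAp n 1 (fun x => ω x ^ q) := by
  simp only [MemAp, if_pos] at hA ⊢
  obtain ⟨C₁, hC₁, hA⟩ := hA
  obtain ⟨C₂, hC₂, hRH⟩ := (memRH_iff hq).1 hRH
  refine ⟨C₂ * C₁ ^ q, ENNReal.mul_ne_top hC₂ (ENNReal.rpow_ne_top_of_nonneg hq.le hC₁),
    fun c r hr => ?_⟩
  filter_upwards [hA c r hr] with y hy
  calc avgE n (fun x => ω x ^ q) c r ≤ C₂ * avgE n ω c r ^ q := hRH c r hr
    _ ≤ C₂ * (C₁ * ω y) ^ q := by gcongr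
    _ = C₂ * C₁ ^ q * ω y ^ q := by rw [ENNReal.mul_rpow_of_nonneg _ _ hq.le, mul_assoc]

theorem memAp_one_and_memRH_of_memAp_one_rpow (hm : Measurable ω) (hq : 1 < q)
    (h : MemAp n 1 (fun x => ω x ^ q)) : MemAp n 1 ω ∧ MemRH n q ω := by
  have hq₀ : 0 < q := by linarith
  simp only [MemAp, if_pos] at h ⊢
  obtain ⟨C, hC, h⟩ := h
  have hC' : C ^ q⁻¹ ≠ ⊤ := ENNReal.rpow_ne_top_of_nonneg (inv_nonneg.2 hq₀.le) hC
  have hpt : ∀ (c : Fin n → ℝ) (r : ℝ), 0 < r → ∀ᵐ y ∂volume.restrict (closedBall c r),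
      avgE n (fun x => ω x ^ q) c r ^ q⁻¹ ≤ C ^ q⁻¹ * ω y := by
    intro c r hr
    filter_upwards [h c r hr] with y hy
    rwa [rpow_inv_le_mul_iff hq₀, ENNReal.rpow_inv_rpow hq₀.ne']
  refine ⟨⟨C ^ q⁻¹, hC', fun c r hr => ?_⟩, C ^ q⁻¹, hC', fun c r hr => ?_⟩
  · filter_upwards [hpt c r hr] with y hy
    exact (avgE_le_avgE_rpow_inv hm hr hq).trans hy
  · rw [one_div]
    exact le_mul_avgE_of_ae_le_mul hm hr (hpt c r hr)

theorem memAp_rpow_of_memAp_of_memRH (hq : 0 < q) (hp : 1 < p) (hA : MemAp n p ω)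
    (hRH : MemRH n q ω) : MemAp n (q * (p - 1) + 1) (fun x => ω x ^ q) := by
  obtain ⟨C₁, hC₁, hA⟩ := (memAp_iff_of_one_lt hp).1 hA
  obtain ⟨C₂, hC₂, hRH⟩ := (memRH_iff hq).1 hRH
  refine (memAp_rpow_iff_of_one_lt hq hp).2 ⟨C₂ * C₁ ^ q,
    ENNReal.mul_ne_top hC₂ (ENNReal.rpow_ne_top_of_nonneg hq.le hC₁), fun c r hr => ?_⟩
  set σ := fun x => ω x ^ (-(p - 1)⁻¹)
  calc avgE n (fun x => ω x ^ q) c r * avgE n σ c r ^ (q * (p - 1))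
      ≤ C₂ * avgE n ω c r ^ q * avgE n σ c r ^ (q * (p - 1)) := by gcongr; exact hRH c r hr
    _ = C₂ * (avgE n ω c r * avgE n σ c r ^ (p - 1)) ^ q := by
      rw [ENNReal.mul_rpow_of_nonneg _ _ hq.le, ← ENNReal.rpow_mul, mul_comm (p - 1), mul_assoc]
    _ ≤ C₂ * C₁ ^ q := by gcongr; exact hA c r hr

theorem memAp_and_memRH_of_memAp_rpow (hω : IsWeight n ω) (hq : 1 < q) (hp : 1 < p)
    (h : MemAp n (q * (p - 1) + 1) (fun x => ω x ^ q)) : MemAp n p ω ∧ MemRH n q ω := by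
  have hq₀ : 0 < q := by linarith
  obtain ⟨C, hC, h⟩ := (memAp_rpow_iff_of_one_lt hq₀ hp).1 h
  set σ := fun x => ω x ^ (-(p - 1)⁻¹)
  have hsplit : ∀ a b : ℝ≥0∞, (a * b ^ (p - 1)) ^ q = a ^ q * b ^ (q * (p - 1)) := fun a b => by
    rw [ENNReal.mul_rpow_of_nonneg _ _ hq₀.le, ← ENNReal.rpow_mul, mul_comm (p - 1)]
  refine ⟨(memAp_iff_of_one_lt hp).2 ⟨C ^ q⁻¹,
    ENNReal.rpow_ne_top_of_nonneg (inv_nonneg.2 hq₀.le) hC, fun c r hr => ?_⟩,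
    (memRH_iff hq₀).2 ⟨C, hC, fun c r hr => ?_⟩⟩
  · rw [← ENNReal.rpow_le_rpow_iff hq₀, hsplit]
    calc avgE n ω c r ^ q * avgE n σ c r ^ (q * (p - 1))
        ≤ avgE n (fun x => ω x ^ q) c r * avgE n σ c r ^ (q * (p - 1)) := by
          gcongr
          rw [← ENNReal.le_rpow_inv_iff hq₀]
          exact avgE_le_avgE_rpow_inv hω.1 hr hq
      _ ≤ C := h c r hr
      _ = (C ^ q⁻¹) ^ q := (ENNReal.rpow_inv_rpow hq₀.ne' C).symm
  · calc avgE n (fun x => ω x ^ q) c r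
        ≤ avgE n (fun x => ω x ^ q) c r * (avgE n ω c r * avgE n σ c r ^ (p - 1)) ^ q := by
          refine le_mul_of_one_le_right' (ENNReal.one_le_rpow ?_ hq₀)
          exact hω.one_le_avgE_mul_avgE_rpow_neg_inv hr hp
      _ = avgE n (fun x => ω x ^ q) c r * avgE n σ c r ^ (q * (p - 1)) * avgE n ω c r ^ q := by
          rw [hsplit]; ring
      _ ≤ C * avgE n ω c r ^ q := by gcongr; exact h c r hr

end Muckenhoupt

theorem memAp_and_memRH_iff_memAp_rpow {n : ℕ} {ω : (Fin n → ℝ) → ℝ≥0∞} (hω : IsWeight n ω)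
    {p q : ℝ} (hq : 1 < q) (hp : 1 ≤ p) :
    MemAp n p ω ∧ MemRH n q ω ↔ MemAp n (q * (p - 1) + 1) (fun x => ω x ^ q) := by
  have hq₀ : 0 < q := by linarith
  rcases hp.eq_or_lt with rfl | hp
  · rw [sub_self, mul_zero, zero_add]
    exact ⟨fun h => memAp_one_rpow_of_memAp_one_of_memRH hq₀ h.1 h.2,
      memAp_one_and_memRH_of_memAp_one_rpow hω.1 hq⟩
  · exact ⟨fun h => memAp_rpow_of_memAp_of_memRH hq₀ hp h.1 h.2,
      memAp_and_memRH_of_memAp_rpow hω hq hp⟩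

/-- For `1 ≤ p ≤ ∞` and `1 < q < ∞`: `ω ∈ A_p(ℝⁿ) ∩ RH_q(ℝⁿ)` iff
`ω^q ∈ A_{q(p-1)+1}(ℝⁿ)`. -/
theorem stmt3 (n : ℕ) (p : ℝ≥0∞) (q : ℝ) (hp : 1 ≤ p) (hq : 1 < q)
    (ω : (Fin n → ℝ) → ℝ≥0∞) (hω : IsWeight n ω) :
    (MemApE n p ω ∧ MemRH n q ω) ↔
      MemApE n (ENNReal.ofReal q * (p - 1) + 1) (fun x => ω x ^ q) := by
  have hq₀ : 0 < q := by linarith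
  by_cases hp_top : p = ⊤
  · have hs_top : ENNReal.ofReal q * (p - 1) + 1 = ⊤ := by
      simp [hp_top, ENNReal.mul_top, hq₀]
    simp only [MemApE, if_pos hp_top, if_pos hs_top]
    constructor
    · rintro ⟨⟨p', hp', hA⟩, hRH⟩
      exact ⟨q * (p' - 1) + 1, by nlinarith,
        (memAp_and_memRH_iff_memAp_rpow hω hq hp').1 ⟨hA, hRH⟩⟩
    · rintro ⟨s, hs, hA⟩
      have hp' : 1 ≤ (s - 1) / q + 1 := le_add_of_nonneg_left (by positivity)
      have hs' : q * ((s - 1) / q + 1 - 1) + 1 = s := by field_simp; ring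
      obtain ⟨hA', hRH⟩ := (memAp_and_memRH_iff_memAp_rpow hω hq hp').2 (by rwa [hs'])
      exact ⟨⟨_, hp', hA'⟩, hRH⟩
  · have hs_top : ENNReal.ofReal q * (p - 1) + 1 ≠ ⊤ := by
      simp [hp_top, ENNReal.mul_eq_top]
    have hs : (ENNReal.ofReal q * (p - 1) + 1).toReal = q * (p.toReal - 1) + 1 := by
      rw [ENNReal.toReal_add (by simp [ENNReal.mul_eq_top, hp_top]) one_ne_top,
        ENNReal.toReal_mul, ENNReal.toReal_ofReal hq₀.le, ENNReal.toReal_sub_of_le hp hp_top,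
        toReal_one]
    simp only [MemApE, if_neg hp_top, if_neg hs_top, hs]
    exact memAp_and_memRH_iff_memAp_rpow hω hq (by simpa using ENNReal.toReal_mono hp_top hp)
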